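/- If two qubit effects A(α,a), A(β,b) are jointly measurable (as effects of simple observables), then ‖a×b‖² ≤ (1−‖a‖²)(1−‖b‖²); equivalently, with unsharpness 𝔘(E^{α,a}) := 1 − S(E^{α,a})² where S(E^{α,a}) = ‖a‖·min{α, 2−α}, one has 𝔘(E^{α,a})·𝔘(E^{β,b}) ≥ (1−‖a‖²)(1−‖b‖²) ≥ 4‖[A(α,a),A(β,b)]‖². -/

import Mathlib

noncomputable section

open Matrix
open scoped RealInnerProductSpace ComplexOrder

abbrev V3 := EuclideanSpace ℝ (Fin 3)

def σ1 : Matrix (Fin 2) (Fin 2) ℂ := !![0, 1; 1, 0]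
def σ2 : Matrix (Fin 2) (Fin 2) ℂ := !![0, -Complex.I; Complex.I, 0]
def σ3 : Matrix (Fin 2) (Fin 2) ℂ := !![1, 0; 0, -1]

def dotSigma (a : V3) : Matrix (Fin 2) (Fin 2) ℂ :=
  (a 0 : ℂ) • σ1 + (a 1 : ℂ) • σ2 + (a 2 : ℂ) • σ3

def Amat (α : ℝ) (a : V3) : Matrix (Fin 2) (Fin 2) ℂ :=
  (2⁻¹ : ℂ) • ((α : ℂ) • (1 : Matrix (Fin 2) (Fin 2) ℂ) + dotSigma a)

def matLE (A B : Matrix (Fin 2) (Fin 2) ℂ) : Prop := (B - A).PosSemidef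

def IsEffectM (A : Matrix (Fin 2) (Fin 2) ℂ) : Prop := matLE 0 A ∧ matLE A 1

def JMeff (A B : Matrix (Fin 2) (Fin 2) ℂ) : Prop :=
  ∃ G, matLE 0 G ∧ matLE G A ∧ matLE G B ∧ matLE (A + B - 1) G

def cross3 (a b : V3) : V3 :=
  WithLp.toLp 2 ![a 1 * b 2 - a 2 * b 1, a 2 * b 0 - a 0 * b 2, a 0 * b 1 - a 1 * b 0]

def opNormM (M : Matrix (Fin 2) (Fin 2) ℂ) : ℝ :=
  ‖(Matrix.toEuclideanCLM (𝕜 := ℂ) (n := Fin 2) M : EuclideanSpace ℂ (Fin 2) →L[ℂ] EuclideanSpace ℂ (Fin 2))‖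

set_option maxHeartbeats 1000000
set_option synthInstance.maxHeartbeats 1000000

lemma dotSigma_eq (a : V3) : dotSigma a =
    !![(a 2 : ℂ), (a 0 : ℂ) - Complex.I * a 1; (a 0 : ℂ) + Complex.I * a 1, -(a 2 : ℂ)] := by
  ext i j
  fin_cases i <;> fin_cases j <;> simp [dotSigma, σ1, σ2, σ3] <;> ring

lemma comm_eq (α β : ℝ) (a b : V3) :
    Amat α a * Amat β b - Amat β b * Amat α a
      = (Complex.I / 2) • dotSigma (cross3 a b) := by
  have hc0 : ((cross3 a b) 0 : ℝ) = a 1 * b 2 - a 2 * b 1 := rfl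
  have hc1 : ((cross3 a b) 1 : ℝ) = a 2 * b 0 - a 0 * b 2 := rfl
  have hc2 : ((cross3 a b) 2 : ℝ) = a 0 * b 1 - a 1 * b 0 := rfl
  ext i j
  fin_cases i <;> fin_cases j <;>
    simp [Amat, dotSigma_eq, hc0, hc1, hc2, Matrix.mul_apply, Fin.sum_univ_two,
      Matrix.one_apply] <;> push_cast <;> ring_nf <;> simp [Complex.I_sq] <;> ring_nf

lemma dotSigma_herm (c : V3) : (dotSigma c)ᴴ = dotSigma c := by
  ext i j
  fin_cases i <;> fin_cases j <;>
    simp [dotSigma_eq, Matrix.conjTranspose_apply] <;> ring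

lemma norm_sq_eq (c : V3) : ‖c‖ ^ 2 = c 0 ^ 2 + c 1 ^ 2 + c 2 ^ 2 := by
  rw [← real_inner_self_eq_norm_sq]
  simp only [PiLp.inner_apply, Fin.sum_univ_three, RCLike.inner_apply, conj_trivial]
  ring

lemma inner_eq (a b : V3) : ⟪a, b⟫ = a 0 * b 0 + a 1 * b 1 + a 2 * b 2 := by
  simp [PiLp.inner_apply, Fin.sum_univ_three]; ring

lemma dotSigma_sq (c : V3) : dotSigma c * dotSigma c = ((‖c‖ ^ 2 : ℝ) : ℂ) • 1 := by
  rw [norm_sq_eq]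
  ext i j
  fin_cases i <;> fin_cases j <;>
    simp [dotSigma_eq, Matrix.mul_apply, Fin.sum_univ_two, Matrix.one_apply] <;>
    push_cast <;> ring_nf <;> simp [Complex.I_sq] <;> ring_nf

lemma opNormM_sq (M : Matrix (Fin 2) (Fin 2) ℂ) :
    opNormM M ^ 2 = opNormM (Mᴴ * M) := by
  unfold opNormM
  rw [_root_.map_mul, ← Matrix.star_eq_conjTranspose, map_star,
    ContinuousLinearMap.star_eq_adjoint,
    show ContinuousLinearMap.adjoint (Matrix.toEuclideanCLM (𝕜 := ℂ) (n := Fin 2) M) *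
        Matrix.toEuclideanCLM (𝕜 := ℂ) (n := Fin 2) M
      = ContinuousLinearMap.adjoint (Matrix.toEuclideanCLM (𝕜 := ℂ) (n := Fin 2) M) ∘L
        Matrix.toEuclideanCLM (𝕜 := ℂ) (n := Fin 2) M from rfl,
    ContinuousLinearMap.norm_adjoint_comp_self, sq]

lemma opNormM_smul_one (r : ℝ) (hr : 0 ≤ r) : opNormM (((r : ℂ)) • 1) = r := by
  unfold opNormM
  rw [_root_.map_smul, _root_.map_one]
  have h : ‖((r:ℂ) • (1 : EuclideanSpace ℂ (Fin 2) →L[ℂ] EuclideanSpace ℂ (Fin 2)))‖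
      = ‖(r:ℂ)‖ * ‖(1 : EuclideanSpace ℂ (Fin 2) →L[ℂ] EuclideanSpace ℂ (Fin 2))‖ :=
    norm_smul ((r:ℂ)) (1 : EuclideanSpace ℂ (Fin 2) →L[ℂ] EuclideanSpace ℂ (Fin 2))
  rw [h, norm_one]
  simp [abs_of_nonneg hr]

lemma MhM (c : V3) :
    ((Complex.I / 2) • dotSigma c)ᴴ * ((Complex.I / 2) • dotSigma c)
      = ((‖c‖ ^ 2 / 4 : ℝ) : ℂ) • 1 := by
  rw [Matrix.conjTranspose_smul, dotSigma_herm, Matrix.smul_mul, Matrix.mul_smul,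
    smul_smul, dotSigma_sq, smul_smul]
  congr 1
  have hs : star (Complex.I / 2) * (Complex.I / 2) = (1/4 : ℂ) := by
    simp [Complex.star_def, map_div₀, Complex.conj_I]
    linear_combination (-1/4 : ℂ) * Complex.I_mul_I
  rw [hs]
  push_cast
  ring

lemma opNormM_comm_sq (α β : ℝ) (a b : V3) :
    4 * opNormM (Amat α a * Amat β b - Amat β b * Amat α a) ^ 2 = ‖cross3 a b‖ ^ 2 := by
  rw [comm_eq, opNormM_sq, MhM, opNormM_smul_one _ (by positivity)]
  ring

theorem stmt14 (α β : ℝ) (a b : V3) (ha : ‖a‖ ≤ α) (ha2 : α ≤ 2 - ‖a‖)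
    (hb : ‖b‖ ≤ β) (hb2 : β ≤ 2 - ‖b‖)
    (h : ‖a + b‖ + ‖a - b‖ ≤ 2) :
    ‖cross3 a b‖ ^ 2 ≤ (1 - ‖a‖ ^ 2) * (1 - ‖b‖ ^ 2) ∧
    (1 - (‖a‖ * (1 - |1 - α|)) ^ 2) * (1 - (‖b‖ * (1 - |1 - β|)) ^ 2) ≥
      (1 - ‖a‖ ^ 2) * (1 - ‖b‖ ^ 2) ∧
    (1 - ‖a‖ ^ 2) * (1 - ‖b‖ ^ 2) ≥
      4 * opNormM (Amat α a * Amat β b - Amat β b * Amat α a) ^ 2 := by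
  have hna : (0:ℝ) ≤ ‖a‖ := norm_nonneg a
  have hnb : (0:ℝ) ≤ ‖b‖ := norm_nonneg b
  have hna1 : ‖a‖ ≤ 1 := by linarith
  have hnb1 : ‖b‖ ≤ 1 := by linarith
  have hxe : ‖a + b‖ ^ 2 = ‖a‖ ^ 2 + 2 * ⟪a, b⟫ + ‖b‖ ^ 2 := norm_add_sq_real a b
  have hye : ‖a - b‖ ^ 2 = ‖a‖ ^ 2 - 2 * ⟪a, b⟫ + ‖b‖ ^ 2 := norm_sub_sq_real a b
  have hx0 : (0:ℝ) ≤ ‖a + b‖ := norm_nonneg _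
  have hy0 : (0:ℝ) ≤ ‖a - b‖ := norm_nonneg _
  have hs4 : (‖a + b‖ + ‖a - b‖) ^ 2 ≤ 4 := by nlinarith [add_nonneg hx0 hy0]
  have hxy2 : ‖a + b‖ * ‖a - b‖ ≤ 2 - ‖a‖ ^ 2 - ‖b‖ ^ 2 := by nlinarith [hs4]
  have hxy0 : (0:ℝ) ≤ ‖a + b‖ * ‖a - b‖ := mul_nonneg hx0 hy0
  have hprodeq : (‖a + b‖ * ‖a - b‖) ^ 2 = (‖a‖ ^ 2 + ‖b‖ ^ 2) ^ 2 - 4 * ⟪a, b⟫ ^ 2 := by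
    rw [mul_pow, hxe, hye]; ring
  have hkey : ‖a‖ ^ 2 + ‖b‖ ^ 2 ≤ 1 + ⟪a, b⟫ ^ 2 := by
    nlinarith [mul_nonneg (sub_nonneg.2 hxy2)
      (by linarith : (0:ℝ) ≤ 2 - ‖a‖ ^ 2 - ‖b‖ ^ 2 + ‖a + b‖ * ‖a - b‖), hprodeq]
  have hlag : ‖cross3 a b‖ ^ 2 = ‖a‖ ^ 2 * ‖b‖ ^ 2 - ⟪a, b⟫ ^ 2 := by
    rw [norm_sq_eq, norm_sq_eq a, norm_sq_eq b, inner_eq]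
    have h0 : ((cross3 a b) 0 : ℝ) = a 1 * b 2 - a 2 * b 1 := rfl
    have h1 : ((cross3 a b) 1 : ℝ) = a 2 * b 0 - a 0 * b 2 := rfl
    have h2 : ((cross3 a b) 2 : ℝ) = a 0 * b 1 - a 1 * b 0 := rfl
    rw [h0, h1, h2]; ring
  have part1 : ‖cross3 a b‖ ^ 2 ≤ (1 - ‖a‖ ^ 2) * (1 - ‖b‖ ^ 2) := by nlinarith
  refine ⟨part1, ?_, ?_⟩
  · have hea : |1 - α| ≤ 1 - ‖a‖ := abs_le.2 ⟨by linarith, by linarith⟩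
    have heb : |1 - β| ≤ 1 - ‖b‖ := abs_le.2 ⟨by linarith, by linarith⟩
    have hea0 : (0:ℝ) ≤ |1 - α| := abs_nonneg _
    have heb0 : (0:ℝ) ≤ |1 - β| := abs_nonneg _
    have h1 : (‖a‖ * (1 - |1 - α|)) ^ 2 ≤ ‖a‖ ^ 2 := by
      nlinarith [mul_nonneg (mul_nonneg (sq_nonneg ‖a‖) hea0)
        (by linarith : (0:ℝ) ≤ 2 - |1 - α|)]
    have h2 : (‖b‖ * (1 - |1 - β|)) ^ 2 ≤ ‖b‖ ^ 2 := by
      nlinarith [mul_nonneg (mul_nonneg (sq_nonneg ‖b‖) heb0)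
        (by linarith : (0:ℝ) ≤ 2 - |1 - β|)]
    have h3 : (0:ℝ) ≤ 1 - ‖b‖ ^ 2 := by nlinarith
    have h4 : (0:ℝ) ≤ 1 - (‖a‖ * (1 - |1 - α|)) ^ 2 := by nlinarith
    exact mul_le_mul (by linarith) (by linarith) h3 h4
  · rw [ge_iff_le, opNormM_comm_sq α β a b]
    exact part1
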